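/- Suppose k ≥ 3. Let G be a k-regular digraph (with connected underlying graph) equipped with an η-function θ where 0 ≤ η ≤ π, and let U = U(G^±) be the Grover transfer matrix of G^±. Let R be the 0/1 matrix indexed by A(G^±) with R_{ab} = 1 iff the ordered pair m(a,b) = (t(b), o(a)) belongs to A(G) ∩ A(G)⁻¹, and let J be the all-ones matrix. Then for ε ∈ {+,−}: U_θ^{(2,ε)} = (U²)^ε if 0 ≤ η < π/2; U_θ^{(2,ε)} = (U²)^ε ∘ R if η = π/2; and U_θ^{(2,ε)} = (U²)^ε ∘ R + (U²)^{−ε} ∘ (J − R) if π/2 < η ≤ π, where ∘ denotes the Hadamard (entrywise) product and −ε denotes the opposite sign of ε. -/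

import Mathlib

open Matrix Polynomial

noncomputable section

variable {V : Type} [Fintype V] [DecidableEq V]

/-- The set of symmetric arcs of a simple graph `G`: ordered pairs of adjacent vertices. -/
abbrev GArc (G : SimpleGraph V) : Type := {p : V × V // G.Adj p.1 p.2}

/-- The origin of an arc. -/
def arcO {G : SimpleGraph V} (a : GArc G) : V := a.1.1

/-- The terminus of an arc. -/
def arcT {G : SimpleGraph V} (a : GArc G) : V := a.1.2

/-- The inverse of an arc. -/
def arcInv {G : SimpleGraph V} (a : GArc G) : GArc G := ⟨(a.1.2, a.1.1), a.2.symm⟩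

/-- The boundary matrix `K`, with `K_{v,a} = δ_{v,t(a)} / √(deg t(a))`. -/
def bdK (G : SimpleGraph V) [DecidableRel G.Adj] : Matrix V (GArc G) ℂ :=
  fun v a => if v = arcT a then ((1 / Real.sqrt (G.degree (arcT a)) : ℝ) : ℂ) else 0

/-- The coin operator `C = 2K*K - I`. -/
def coinC (G : SimpleGraph V) [DecidableRel G.Adj] : Matrix (GArc G) (GArc G) ℂ :=
  (2 : ℂ) • ((bdK G)ᴴ * bdK G) - 1

/-- The shift operator `S`, with `S_{ab} = δ_{a,b⁻¹}`. -/
def shiftS (G : SimpleGraph V) : Matrix (GArc G) (GArc G) ℂ :=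
  fun a b => if a = arcInv b then 1 else 0

/-- The perturbed shift `S_θ`, with `(S_θ)_{ab} = e^{iθ(b)} δ_{a,b⁻¹}`. -/
def shiftStheta (G : SimpleGraph V) (θ : GArc G → ℝ) : Matrix (GArc G) (GArc G) ℂ :=
  fun a b => if a = arcInv b then Complex.exp ((θ b : ℂ) * Complex.I) else 0

/-- The Grover transfer matrix `U = SC`. -/
def groverU (G : SimpleGraph V) [DecidableRel G.Adj] : Matrix (GArc G) (GArc G) ℂ :=
  shiftS G * coinC G

/-- The transfer matrix `U_θ = S_θ C`. -/
def transferU (G : SimpleGraph V) [DecidableRel G.Adj] (θ : GArc G → ℝ) :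
    Matrix (GArc G) (GArc G) ℂ :=
  shiftStheta G θ * coinC G

/-- The diagonal matrix `D_θ` with `(D_θ)_{ab} = e^{iθ(a)} δ_{ab}`. -/
def Dtheta (G : SimpleGraph V) (θ : GArc G → ℝ) : Matrix (GArc G) (GArc G) ℂ :=
  Matrix.diagonal fun a => Complex.exp ((θ a : ℂ) * Complex.I)

/-- The positive support of a (real-valued) complex matrix. -/
def suppPos {α : Type} (M : Matrix α α ℂ) : Matrix α α ℂ :=
  fun a b => if 0 < (M a b).re then 1 else 0

/-- The negative support of a (real-valued) complex matrix. -/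
def suppNeg {α : Type} (M : Matrix α α ℂ) : Matrix α α ℂ :=
  fun a b => if (M a b).re < 0 then 1 else 0

/-- The positive support of a real matrix. -/
def suppPosR {α : Type} (M : Matrix α α ℝ) : Matrix α α ℝ :=
  fun a b => if 0 < M a b then 1 else 0

/-- The negative support of a real matrix. -/
def suppNegR {α : Type} (M : Matrix α α ℝ) : Matrix α α ℝ :=
  fun a b => if M a b < 0 then 1 else 0

/-- A digraph on `V`: an irreflexive (Boolean) arc relation. -/
structure Dgraph (V : Type) where
  adj : V → V → Bool
  loopless : ∀ v, adj v v = false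

namespace Dgraph

/-- `(x,y)` is an arc of `D`. -/
def Adj (D : Dgraph V) (x y : V) : Prop := D.adj x y = true

instance (D : Dgraph V) : DecidableRel D.Adj := fun _ _ => by unfold Adj; infer_instance

/-- The underlying (undirected simple) graph `G^±`. -/
def underlying (D : Dgraph V) : SimpleGraph V where
  Adj x y := D.Adj x y ∨ D.Adj y x
  symm := ⟨fun _ _ h => h.symm⟩
  loopless := ⟨fun v h => by
    rcases h with h | h <;> exact absurd h (by simp [Adj, D.loopless v])⟩

instance (D : Dgraph V) : DecidableRel D.underlying.Adj :=
  fun x y => inferInstanceAs (Decidable (D.Adj x y ∨ D.Adj y x))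

/-- The transpose digraph `G⁻¹`. -/
def transpose (D : Dgraph V) : Dgraph V where
  adj x y := D.adj y x
  loopless := D.loopless

end Dgraph

/-- The `η`-function of a digraph `D`: `η` on `A∖A⁻¹`, `-η` on `A⁻¹∖A`, `0` on digons. -/
def etaFun (D : Dgraph V) (η : ℝ) (a : GArc D.underlying) : ℝ :=
  if D.Adj (arcO a) (arcT a) then (if D.Adj (arcT a) (arcO a) then 0 else η) else -η

/-- The `η`-Hermitian adjacency matrix `H_η`. -/
def Heta (D : Dgraph V) (η : ℝ) : Matrix V V ℂ :=
  fun x y =>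
    if D.Adj x y then (if D.Adj y x then 1 else Complex.exp ((η : ℂ) * Complex.I))
    else if D.Adj y x then Complex.exp (-(η : ℂ) * Complex.I) else 0

/-- The diagonal matrix `D^{-1/2}` of inverse square roots of degrees. -/
def degHalfInv (D : Dgraph V) : Matrix V V ℂ :=
  Matrix.diagonal fun x => ((1 / Real.sqrt (D.underlying.degree x) : ℝ) : ℂ)

/-- The normalized `η`-Hermitian adjacency matrix `H̃_η = D^{-1/2} H_η D^{-1/2}`. -/
def normHeta (D : Dgraph V) (η : ℝ) : Matrix V V ℂ :=
  degHalfInv D * Heta D η * degHalfInv D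

/-- The multiset of preimages of `μ` under `φ(z) = (z + z⁻¹)/2` on the unit circle:
the distinct roots of `z² - 2μz + 1`. -/
def phiInv (μ : ℂ) : Multiset ℂ :=
  ((X ^ 2 - Polynomial.C (2 * μ) * X + 1 : Polynomial ℂ).roots).dedup

/-- A closed path in a graph: a nonempty chain of arcs returning to its start. -/
structure ClosedPath (G : SimpleGraph V) where
  arcs : List (GArc G)
  ne : arcs ≠ []
  chain : arcs.Chain' fun a b => arcT a = arcO b
  closed : arcT (arcs.getLast ne) = arcO (arcs.head ne)

/-- `ℐ(c) = Σ_j θ(a_j)` for a closed path `c`. -/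
def pathSum {G : SimpleGraph V} (θ : GArc G → ℝ) (c : ClosedPath G) : ℝ :=
  (c.arcs.map θ).sum

/-- `x ∈ 2πℤ`. -/
def in2piZ (x : ℝ) : Prop := ∃ m : ℤ, x = 2 * Real.pi * m

/-- `x ∈ 2π(ℤ + 1/2)`. -/
def in2piZhalf (x : ℝ) : Prop := ∃ m : ℤ, x = 2 * Real.pi * (m + 1 / 2)

/-- The matrix `F_t` with `(F_t)_{x,a} = δ_{x,t(a)}`. -/
def Ft (G : SimpleGraph V) : Matrix V (GArc G) ℂ := fun x a => if x = arcT a then 1 else 0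

/-- The matrix `F_o` with `(F_o)_{x,a} = δ_{x,o(a)}`. -/
def Fo (G : SimpleGraph V) : Matrix V (GArc G) ℂ := fun x a => if x = arcO a then 1 else 0

/-- The 0/1 matrix `R` with `R_{ab} = 1` iff `m(a,b) = (t(b),o(a)) ∈ A(G) ∩ A(G)⁻¹`. -/
def Rmat (D : Dgraph V) : Matrix (GArc D.underlying) (GArc D.underlying) ℂ :=
  fun a b => if D.Adj (arcT b) (arcO a) ∧ D.Adj (arcO a) (arcT b) then 1 else 0

/-- `U_θ^{(n,+)}`: the 0/1 matrix with `(a,b)` entry `1` iff `Re(D_θ U_θⁿ)_{ab} > 0`. -/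
def suppPow (D : Dgraph V) (η : ℝ) (n : ℕ) :
    Matrix (GArc D.underlying) (GArc D.underlying) ℂ :=
  suppPos (Dtheta D.underlying (etaFun D η) * transferU D.underlying (etaFun D η) ^ n)

/-- `U_θ^{(n,−)}`: the 0/1 matrix with `(a,b)` entry `1` iff `Re(D_θ U_θⁿ)_{ab} < 0`. -/
def suppPowNeg (D : Dgraph V) (η : ℝ) (n : ℕ) :
    Matrix (GArc D.underlying) (GArc D.underlying) ℂ :=
  suppNeg (Dtheta D.underlying (etaFun D η) * transferU D.underlying (etaFun D η) ^ n)

/-- The number of digons of a digraph. -/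
def digonCount (D : Dgraph V) : ℕ :=
  (Finset.univ.filter fun p : V × V => D.Adj p.1 p.2 ∧ D.Adj p.2 p.1).card / 2

/-- The digraph `Y_{a,n-a}`: two complete (digon) blocks `[a]` and `[n]∖[a]`, with all
arcs from the first block to the second. -/
def Ydigraph (n a : ℕ) : Dgraph (Fin n) where
  adj x y := decide ((x ≠ y) ∧
    ((x.val < a ∧ y.val < a) ∨ (a ≤ x.val ∧ a ≤ y.val) ∨ (x.val < a ∧ a ≤ y.val)))
  loopless := fun v => by simp

/-- The shift operator as a real matrix. -/
def shiftSR (G : SimpleGraph V) : Matrix (GArc G) (GArc G) ℝ :=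
  fun a b => if a = arcInv b then 1 else 0

/-- The Grover transfer matrix as a real matrix, given by its entries
`U_{ab} = (2/deg t(b)) δ_{t(b),o(a)} − δ_{a⁻¹,b}`. -/
def groverEnt (G : SimpleGraph V) [DecidableRel G.Adj] : Matrix (GArc G) (GArc G) ℝ :=
  fun a b => 2 / (G.degree (arcT b)) * (if arcT b = arcO a then 1 else 0)
    - (if arcInv a = b then 1 else 0)

end

/-!
Since `θ(a⁻¹) = -θ(a)`, we have `D_θ S_θ = S`, hence `D_θ U_θ = U`, `U_θ = D_θ⁻¹ U` and
`D_θ U_θ² = U D_θ⁻¹ U`. An entry `U_{ac}` vanishes unless `t(c) = o(a)`, so every summand of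
`(U D_θ⁻¹ U)_{ab}` runs through an arc `c` from `t(b)` to `o(a)`, i.e. `c = m(a,b)`. As `U` is
real, `Re (D_θ U_θ²)_{ab} = cos θ(m(a,b)) · (U²)_{ab}`, and `cos θ(m(a,b))` is `1` on digons and
`cos η` otherwise. The three cases are the three possible signs of `cos η` for `η ∈ [0, π]`.
-/

section Arcs

variable {V : Type}

@[simp] lemma arcInv_arcInv {G : SimpleGraph V} (a : GArc G) : arcInv (arcInv a) = a := rfl

@[simp] lemma arcO_arcInv {G : SimpleGraph V} (a : GArc G) : arcO (arcInv a) = arcT a := rfl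

@[simp] lemma arcT_arcInv {G : SimpleGraph V} (a : GArc G) : arcT (arcInv a) = arcO a := rfl

/-- The η-function on all ordered pairs of vertices: `etaFun D η a` is, by definition,
`etaPair D η (arcO a) (arcT a)`. -/
def etaPair (D : Dgraph V) (η : ℝ) (x y : V) : ℝ :=
  if D.Adj x y then (if D.Adj y x then 0 else η) else -η

lemma cos_etaPair (D : Dgraph V) (η : ℝ) (x y : V) :
    Real.cos (etaPair D η x y) = if D.Adj x y ∧ D.Adj y x then 1 else Real.cos η := by
  unfold etaPair
  by_cases hxy : D.Adj x y <;> by_cases hyx : D.Adj y x <;> simp [hxy, hyx]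

lemma etaFun_arcInv (D : Dgraph V) (η : ℝ) (a : GArc D.underlying) :
    etaFun D η (arcInv a) = -etaFun D η a := by
  have ha : D.Adj (arcO a) (arcT a) ∨ D.Adj (arcT a) (arcO a) := a.2
  unfold etaFun
  by_cases hot : D.Adj (arcO a) (arcT a) <;> by_cases hto : D.Adj (arcT a) (arcO a) <;>
    simp_all

end Arcs

section Supports

variable {α : Type} {P Q : Matrix α α ℂ} {R : α → α → Prop} [DecidableRel R] {c : ℝ}

lemma supp_eq_of_re_eq_ite_mul_of_pos
    (h : ∀ a b, (P a b).re = (if R a b then 1 else c) * (Q a b).re) (hc : 0 < c) :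
    suppPos P = suppPos Q ∧ suppNeg P = suppNeg Q := by
  constructor <;> ext a b <;> simp only [suppPos, suppNeg, h] <;>
    by_cases hR : R a b <;> simp [hR, hc, mul_neg_iff, hc.not_gt]

lemma supp_eq_of_re_eq_ite_mul_of_zero
    (h : ∀ a b, (P a b).re = (if R a b then 1 else 0) * (Q a b).re) :
    suppPos P = suppPos Q ⊙ (of fun a b => if R a b then 1 else 0) ∧
      suppNeg P = suppNeg Q ⊙ (of fun a b => if R a b then 1 else 0) := by
  constructor <;> ext a b <;> simp only [suppPos, suppNeg, hadamard_apply, of_apply, h] <;>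
    by_cases hR : R a b <;> simp [hR]

lemma supp_eq_of_re_eq_ite_mul_of_neg
    (h : ∀ a b, (P a b).re = (if R a b then 1 else c) * (Q a b).re) (hc : c < 0) :
    suppPos P = suppPos Q ⊙ (of fun a b => if R a b then 1 else 0)
        + suppNeg Q ⊙ (of (fun _ _ => 1) - of fun a b => if R a b then 1 else 0) ∧
      suppNeg P = suppNeg Q ⊙ (of fun a b => if R a b then 1 else 0)
        + suppPos Q ⊙ (of (fun _ _ => 1) - of fun a b => if R a b then 1 else 0) := by
  constructor <;> ext a b <;>
    simp only [suppPos, suppNeg, hadamard_apply, of_apply, Matrix.add_apply, Matrix.sub_apply,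
      h] <;>
    by_cases hR : R a b <;> simp [hR, mul_pos_iff, mul_neg_iff, hc, hc.not_gt]

end Supports

variable {V : Type} [Fintype V] [DecidableEq V]

lemma coinC_apply (G : SimpleGraph V) [DecidableRel G.Adj] (a b : GArc G) :
    coinC G a b = ((2 / G.degree (arcT b) : ℝ) : ℂ) * (if arcT a = arcT b then 1 else 0)
      - (if a = b then 1 else 0) := by
  have hK : ∀ v, ((bdK G)ᴴ) a v * bdK G v b
      = if v = arcT b then (if arcT a = arcT b then ((1 / G.degree (arcT b) : ℝ) : ℂ) else 0)
        else 0 := by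
    intro v
    simp only [conjTranspose_apply, bdK]
    split_ifs with hv hab hab' hv' <;> try simp_all
    rw [hab', ← mul_inv, ← Complex.ofReal_mul, Real.mul_self_sqrt (Nat.cast_nonneg _),
      Complex.ofReal_natCast]
  rw [coinC, Matrix.sub_apply, Matrix.smul_apply, mul_apply,
    Finset.sum_congr rfl fun v _ => hK v, Finset.sum_ite_eq', if_pos (Finset.mem_univ _), one_apply]
  split_ifs <;> push_cast <;> ring

lemma groverU_eq_map_groverEnt (G : SimpleGraph V) [DecidableRel G.Adj] :
    groverU G = (groverEnt G).map ((↑) : ℝ → ℂ) := by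
  ext a b
  rw [groverU, mul_apply, Finset.sum_eq_single (arcInv a), coinC_apply]
  · simp only [shiftS, groverEnt, map_apply, arcInv_arcInv, arcT_arcInv, if_true, one_mul, eq_comm (a := arcO a)]
    split_ifs <;> push_cast <;> ring
  · intro c _ hc
    simp [shiftS, show a ≠ arcInv c from fun h => hc (by simp [h])]
  · simp

lemma arcT_eq_arcO_of_groverEnt_ne_zero {G : SimpleGraph V} [DecidableRel G.Adj]
    {a b : GArc G} (h : groverEnt G a b ≠ 0) : arcT b = arcO a := by
  contrapose! h
  have hab : arcInv a ≠ b := by rintro rfl; exact h rfl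
  simp [groverEnt, h, hab]

lemma arcT_eq_arcO_of_groverU_ne_zero {G : SimpleGraph V} [DecidableRel G.Adj]
    {a b : GArc G} (h : groverU G a b ≠ 0) : arcT b = arcO a := by
  rw [groverU_eq_map_groverEnt, map_apply, Complex.ofReal_ne_zero] at h
  exact arcT_eq_arcO_of_groverEnt_ne_zero h

lemma mul_diagonal_mul_apply_of_arcT_eq_arcO {G : SimpleGraph V} [DecidableRel G.Adj]
    {M N : Matrix (GArc G) (GArc G) ℂ} (hM : ∀ a c, M a c ≠ 0 → arcT c = arcO a)
    (hN : ∀ c b, N c b ≠ 0 → arcT b = arcO c) (f : V → V → ℂ) (a b : GArc G) :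
    (M * diagonal (fun c : GArc G => f (arcO c) (arcT c)) * N) a b
      = f (arcT b) (arcO a) * (M * N) a b := by
  rw [mul_apply, mul_apply, Finset.mul_sum]
  simp only [mul_diagonal]
  refine Finset.sum_congr rfl fun c _ => ?_
  by_cases hac : M a c = 0
  · simp [hac]
  by_cases hcb : N c b = 0
  · simp [hcb]
  rw [hM a c hac, ← hN c b hcb]
  ring

lemma shiftStheta_eq_Dtheta_neg_mul_shiftS (G : SimpleGraph V) [DecidableRel G.Adj]
    {θ : GArc G → ℝ} (hθ : ∀ a, θ (arcInv a) = -θ a) : shiftStheta G θ = Dtheta G (-θ) * shiftS G := by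
  ext a b
  simp only [Dtheta, diagonal_mul, shiftStheta, shiftS]
  split_ifs with hab
  · subst hab
    simp [hθ]
  · simp

lemma Dtheta_mul_Dtheta_neg (G : SimpleGraph V) [DecidableRel G.Adj] (θ : GArc G → ℝ) :
    Dtheta G θ * Dtheta G (-θ) = 1 := by
  simp [Dtheta, diagonal_mul_diagonal, ← Complex.exp_add]

lemma Dtheta_mul_transferU_sq (G : SimpleGraph V) [DecidableRel G.Adj] {θ : GArc G → ℝ}
    (hθ : ∀ a, θ (arcInv a) = -θ a) :
    Dtheta G θ * transferU G θ ^ 2 = groverU G * Dtheta G (-θ) * groverU G := by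
  have hU : transferU G θ = Dtheta G (-θ) * groverU G := by
    rw [transferU, shiftStheta_eq_Dtheta_neg_mul_shiftS G hθ, groverU, Matrix.mul_assoc]
  simp only [sq, hU, ← Matrix.mul_assoc, Dtheta_mul_Dtheta_neg, Matrix.one_mul]

lemma re_Dtheta_mul_transferU_sq_apply (D : Dgraph V) (η : ℝ) (a b : GArc D.underlying) :
    ((Dtheta D.underlying (etaFun D η) * transferU D.underlying (etaFun D η) ^ 2) a b).re
      = (if D.Adj (arcT b) (arcO a) ∧ D.Adj (arcO a) (arcT b) then 1 else Real.cos η)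
        * ((groverU D.underlying * groverU D.underlying) a b).re := by
  have hUU : groverU D.underlying * groverU D.underlying
      = (groverEnt D.underlying * groverEnt D.underlying).map ((↑) : ℝ → ℂ) := by
    rw [groverU_eq_map_groverEnt]
    exact (Matrix.map_mul (f := Complex.ofRealHom)).symm
  have hD : Dtheta D.underlying (-etaFun D η)
      = diagonal fun c => Complex.exp ((-etaPair D η (arcO c) (arcT c) : ℝ) * Complex.I) := rfl
  have hloc := mul_diagonal_mul_apply_of_arcT_eq_arcO (M := groverU D.underlying)
    (N := groverU D.underlying)
    (fun _ _ => arcT_eq_arcO_of_groverU_ne_zero) (fun _ _ => arcT_eq_arcO_of_groverU_ne_zero)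
    (fun x y => Complex.exp ((-etaPair D η x y : ℝ) * Complex.I)) a b
  rw [Dtheta_mul_transferU_sq D.underlying (etaFun_arcInv D η), hD, hloc, hUU, map_apply, Complex.re_mul_ofReal, Complex.exp_ofReal_mul_I_re, Real.cos_neg,
    cos_etaPair, Complex.ofReal_re]

theorem stmt17_general {V : Type} [Fintype V] [DecidableEq V] (η : ℝ)
    (hη0 : 0 ≤ η) (hηpi : η ≤ Real.pi) (D : Dgraph V) :
    let U := groverU D.underlying
    let J : Matrix (GArc D.underlying) (GArc D.underlying) ℂ := fun _ _ => 1
    (η < Real.pi / 2 →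
      suppPow D η 2 = suppPos (U * U) ∧ suppPowNeg D η 2 = suppNeg (U * U)) ∧
    (η = Real.pi / 2 →
      suppPow D η 2 = Matrix.hadamard (suppPos (U * U)) (Rmat D) ∧
      suppPowNeg D η 2 = Matrix.hadamard (suppNeg (U * U)) (Rmat D)) ∧
    (Real.pi / 2 < η →
      suppPow D η 2 =
        Matrix.hadamard (suppPos (U * U)) (Rmat D)
          + Matrix.hadamard (suppNeg (U * U)) (J - Rmat D) ∧
      suppPowNeg D η 2 =
        Matrix.hadamard (suppNeg (U * U)) (Rmat D)
          + Matrix.hadamard (suppPos (U * U)) (J - Rmat D)) := by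
  intro U J
  have hre := re_Dtheta_mul_transferU_sq_apply D η
  refine ⟨fun hη => ?_, fun hη => ?_, fun hη => ?_⟩
  · exact supp_eq_of_re_eq_ite_mul_of_pos hre
      (Real.cos_pos_of_mem_Ioo ⟨by linarith [Real.pi_pos], hη⟩)
  · subst hη
    rw [Real.cos_pi_div_two] at hre
    exact supp_eq_of_re_eq_ite_mul_of_zero hre
  · exact supp_eq_of_re_eq_ite_mul_of_neg hre
      (Real.cos_neg_of_pi_div_two_lt_of_lt hη (by linarith [Real.pi_pos]))

/-- Structure theorem for the supports of the square of the transfer matrix of a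
`k`-regular digraph (`k ≥ 3`), according to the value of `η ∈ [0, π]`. -/
theorem stmt17 {V : Type} [Fintype V] [DecidableEq V] (k : ℕ) (hk : 3 ≤ k) (η : ℝ)
    (hη0 : 0 ≤ η) (hηpi : η ≤ Real.pi) (D : Dgraph V)
    (hconn : D.underlying.Connected) (hreg : ∀ v, D.underlying.degree v = k) :
    let U := groverU D.underlying
    let J : Matrix (GArc D.underlying) (GArc D.underlying) ℂ := fun _ _ => 1
    (η < Real.pi / 2 →
      suppPow D η 2 = suppPos (U * U) ∧ suppPowNeg D η 2 = suppNeg (U * U)) ∧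
    (η = Real.pi / 2 →
      suppPow D η 2 = Matrix.hadamard (suppPos (U * U)) (Rmat D) ∧
      suppPowNeg D η 2 = Matrix.hadamard (suppNeg (U * U)) (Rmat D)) ∧
    (Real.pi / 2 < η →
      suppPow D η 2 =
        Matrix.hadamard (suppPos (U * U)) (Rmat D)
          + Matrix.hadamard (suppNeg (U * U)) (J - Rmat D) ∧
      suppPowNeg D η 2 =
        Matrix.hadamard (suppNeg (U * U)) (Rmat D)
          + Matrix.hadamard (suppPos (U * U)) (J - Rmat D)) :=
  stmt17_general η hη0 hηpi D
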